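/- arXiv:0801.0132 — 2 statements merged into one kernel-verified Lean document; each statement's English description precedes it below -/
import Mathlib

section
/- For the δ-interaction creation function: if x₁ > x'₁ > x₂ > x'₂ > … > x'_N > x_{N+1} (interlacing order), then -c·∑_{n<m}^{N+1}|x_n - x_m| + c·∑_{n=1}^{N+1}∑_{m=1}^{N}|x_n - x'_m| - c·∑_{n<m}^{N}|x'_n - x'_m| = 0. -/
/-!
Induct on `N`. Interlacing makes both sequences strictly decreasing and puts the new bottom pair
`x_{N+1} < x'_N` below every other point, so each absolute value involving it opens with a known
sign. The distances it adds to the two pairwise sums are then, term by term, linear expressions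
that cancel against the distances it adds to the cross sum.
-/

open Finset

def Interlaces {N : ℕ} (x : Fin (N + 1) → ℝ) (x' : Fin N → ℝ) : Prop :=
  ∀ i : Fin N, x' i < x i.castSucc ∧ x i.succ < x' i

def pairDistSum {k : ℕ} (y : Fin k → ℝ) : ℝ :=
  ∑ n, ∑ m, if n < m then |y n - y m| else 0

theorem Fin.sum_sum_ite_lt_castSucc {M : Type*} [AddCommMonoid M] {k : ℕ}
    (f : Fin (k + 1) → Fin (k + 1) → M) :
    ∑ n, ∑ m, (if n < m then f n m else 0) =
      ∑ n : Fin k, ∑ m : Fin k, (if n < m then f n.castSucc m.castSucc else 0) +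
        ∑ n : Fin k, f n.castSucc (Fin.last k) := by
  simp [Fin.sum_univ_castSucc, sum_add_distrib, Fin.castSucc_lt_last,
    (Fin.castSucc_lt_last _).not_gt]

theorem pairDistSum_of_strictAnti {k : ℕ} {y : Fin (k + 1) → ℝ} (hy : StrictAnti y) :
    pairDistSum y =
      pairDistSum (y ∘ Fin.castSucc) + ∑ n : Fin k, (y n.castSucc - y (Fin.last k)) := by
  rw [pairDistSum, Fin.sum_sum_ite_lt_castSucc]
  congr 1
  exact sum_congr rfl fun n _ => abs_of_pos (sub_pos.2 (hy (Fin.castSucc_lt_last n)))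

namespace Interlaces

variable {N : ℕ}

theorem strictAnti_left {x : Fin (N + 1) → ℝ} {x' : Fin N → ℝ} (h : Interlaces x x') :
    StrictAnti x :=
  Fin.strictAnti_iff_succ_lt.2 fun i => (h i).2.trans (h i).1

theorem strictAnti_right {x : Fin (N + 1) → ℝ} {x' : Fin N → ℝ} (h : Interlaces x x') :
    StrictAnti x' := by
  cases N with
  | zero => exact fun i => i.elim0
  | succ N =>
    refine Fin.strictAnti_iff_succ_lt.2 fun i => ?_
    have := (h i.castSucc).2
    rw [Fin.succ_castSucc] at this
    exact (h i.succ).1.trans this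

theorem castSucc {x : Fin (N + 2) → ℝ} {x' : Fin (N + 1) → ℝ} (h : Interlaces x x') :
    Interlaces (x ∘ Fin.castSucc) (x' ∘ Fin.castSucc) := fun i =>
  ⟨(h i.castSucc).1, by simpa only [Function.comp_apply, Fin.succ_castSucc] using (h i.castSucc).2⟩

theorem pairDistSum_add_pairDistSum :
    ∀ {N : ℕ} {x : Fin (N + 1) → ℝ} {x' : Fin N → ℝ}, Interlaces x x' →
      pairDistSum x + pairDistSum x' = ∑ n, ∑ m, |x n - x' m|
  | 0, x, x', _ => by simp [pairDistSum]
  | N + 1, x, x', h => by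
    have hx := h.strictAnti_left
    have hx'_last : ∀ n : Fin (N + 1),
        |x n.castSucc - x' (Fin.last N)| = x n.castSucc - x' (Fin.last N) := fun n =>
      abs_of_pos (sub_pos.2 ((h (Fin.last N)).1.trans_le
        (hx.antitone (Fin.castSucc_le_castSucc_iff.2 (Fin.le_last n)))))
    have hx_last : ∀ m : Fin (N + 1),
        |x (Fin.last (N + 1)) - x' m| = x' m - x (Fin.last (N + 1)) := fun m => by
      rw [abs_sub_comm]
      exact abs_of_pos (sub_pos.2 ((hx.antitone (Fin.le_last m.succ)).trans_lt (h m).2))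
    have ih := h.castSucc.pairDistSum_add_pairDistSum
    simp only [Function.comp_apply] at ih
    rw [pairDistSum_of_strictAnti hx, pairDistSum_of_strictAnti h.strictAnti_right]
    conv_rhs => rw [Fin.sum_univ_castSucc]; enter [1, 2, n]; rw [Fin.sum_univ_castSucc]
    rw [sum_add_distrib, ← ih]
    simp only [hx'_last, hx_last, sum_sub_distrib, sum_const, card_univ, Fintype.card_fin,
      Fin.sum_univ_castSucc (f := x'), nsmul_eq_mul, Nat.cast_succ]
    ring

end Interlaces

theorem stmt_17 (c : ℝ) (N : ℕ) (x : Fin (N + 1) → ℝ) (x' : Fin N → ℝ)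
    (hinter : ∀ i : Fin N, x' i < x i.castSucc ∧ x i.succ < x' i) :
    -c * (∑ n : Fin (N + 1), ∑ m : Fin (N + 1), if n < m then |x n - x m| else 0)
      + c * (∑ n : Fin (N + 1), ∑ m : Fin N, |x n - x' m|)
      - c * (∑ n : Fin N, ∑ m : Fin N, if n < m then |x' n - x' m| else 0) = 0 := by
  have key := Interlaces.pairDistSum_add_pairDistSum (x := x) (x' := x') hinter
  unfold pairDistSum at key
  linear_combination (-c) * key
end

section
/- Free fermion creation step: for distinct real k₁,…,k_{N+1} (with appropriate nonvanishing of k_n - k_{N+1}), the iterated integral ∫_{x₂}^{x₁}dx'₁ ⋯ ∫_{x_{N+1}}^{x_N}dx'_N det[e^{i k_n x'_m}]_{1≤n,m≤N} · e^{i k_{N+1}(∑_{n=1}^{N+1} x_n - ∑_{m=1}^{N} x'_m)} equals (∏_{n=1}^{N}(i k_n - i k_{N+1}))^{-1} · det[e^{i k_n x_m}]_{1≤n,m≤N+1}. -/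
/-!
Factoring `e^{i k_{N+1} x'_m}` out of every column turns the integrand into
`e^{i k_{N+1} Σ x} · det[e^{c_n x'_m}]` with `c_n = i k_n - i k_{N+1}`. Column `m` depends on
`x'_m` alone and the domain is a box, so Fubini integrates the determinant column by column, giving
`det[(e^{c_n x_m} - e^{c_n x_{m+1}}) / c_n]`. Factoring `e^{i k_{N+1} x_m}` out of the columns of
the `(N+1)`-determinant instead makes its last row constant `1`, and subtracting consecutive
columns reduces it to the same determinant of differences.
-/

open MeasureTheory

namespace Matrix

theorem det_eq_det_sub_succ_col_of_last_row_eq_one {R : Type*} [CommRing R] {N : ℕ}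
    (B : Matrix (Fin (N + 1)) (Fin (N + 1)) R) (hB : ∀ m, B (Fin.last N) m = 1) :
    B.det = (of fun n m : Fin N => B n.castSucc m.castSucc - B n.castSucc m.succ).det := by
  let C : Matrix (Fin (N + 1)) (Fin (N + 1)) R :=
    of fun i j => Fin.cases (B i 0) (fun j => B i j.succ - B i j.castSucc) j
  have hBC : B.det = C.det :=
    det_eq_of_forall_col_eq_smul_add_pred (fun _ => 1) (fun _ => rfl) (fun i j => by simp [C])
  have hC_last : ∀ j : Fin N, C (Fin.last N) j.succ = 0 := fun j => by simp [C, hB]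
  have hminor : C.submatrix Fin.castSucc Fin.succ
      = -of fun n m : Fin N => B n.castSucc m.castSucc - B n.castSucc m.succ := by
    ext n m; simp [C]
  rw [hBC, det_succ_row C (Fin.last N), Fin.sum_univ_succ, Finset.sum_eq_zero fun j _ => by
    rw [hC_last, mul_zero, zero_mul], add_zero, Fin.succAbove_last, Fin.succAbove_zero, hminor,
    det_neg]
  simp [C, hB, ← mul_assoc, ← pow_add]

theorem det_exp_mul_eq_exp_mul_det_exp_sub_mul {ι : Type*} [Fintype ι] [DecidableEq ι]
    (a y : ι → ℂ) (b : ℂ) :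
    (of fun n m => Complex.exp (a n * y m)).det
      = Complex.exp (b * ∑ m, y m) * (of fun n m => Complex.exp ((a n - b) * y m)).det := by
  rw [Finset.mul_sum, Complex.exp_sum, ← det_mul_row]
  congr with n m
  rw [of_apply, ← Complex.exp_add]
  ring_nf

end Matrix

open Matrix

theorem integral_det_eq_det_integral {ι 𝕜 : Type*} [Fintype ι] [DecidableEq ι] [RCLike 𝕜]
    {α : ι → Type*} [∀ i, MeasurableSpace (α i)] {μ : (i : ι) → Measure (α i)}
    [∀ i, SigmaFinite (μ i)] (f : ι → (i : ι) → α i → 𝕜)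
    (hf : ∀ n m, Integrable (f n m) (μ m)) :
    ∫ x, (of fun n m => f n m (x m)).det ∂Measure.pi μ
      = (of fun n m => ∫ t, f n m t ∂μ m).det := by
  simp only [det_apply', of_apply]
  rw [integral_finsetSum _ fun σ _ => (Integrable.fintype_prod_dep fun m => hf _ m).const_mul _]
  simp only [integral_const_mul, integral_fintype_prod_eq_prod]

theorem integral_Ioo_exp_mul_complex {a b : ℝ} (hab : a ≤ b) {c : ℂ} (hc : c ≠ 0) :
    ∫ t in Set.Ioo a b, Complex.exp (c * t)
      = (Complex.exp (c * b) - Complex.exp (c * a)) / c := by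
  rw [← integral_Ioc_eq_integral_Ioo, ← intervalIntegral.integral_of_le hab,
    integral_exp_mul_complex hc]

theorem integrableOn_exp_mul_complex_Ioo (a b : ℝ) (c : ℂ) :
    IntegrableOn (fun t : ℝ => Complex.exp (c * t)) (Set.Ioo a b) :=
  (by fun_prop : Continuous fun t : ℝ => Complex.exp (c * t)).integrableOn_Icc.mono_set
    Set.Ioo_subset_Icc_self

theorem stmt_18 (N : ℕ) (x : Fin (N + 1) → ℝ) (k : Fin (N + 1) → ℝ)
    (hx : ∀ i j : Fin (N + 1), i < j → x j < x i)
    (hk : ∀ i j : Fin (N + 1), i ≠ j → k i ≠ k j) :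
    ∫ x' in {x' : Fin N → ℝ | ∀ i : Fin N, x i.succ < x' i ∧ x' i < x i.castSucc},
        (Matrix.det (Matrix.of fun n m : Fin N =>
            Complex.exp (Complex.I * (k n.castSucc : ℂ) * (x' m : ℂ))))
          * Complex.exp (Complex.I * (k (Fin.last N) : ℂ)
              * (((∑ i : Fin (N + 1), x i : ℝ) : ℂ) - ((∑ m : Fin N, x' m : ℝ) : ℂ)))
      = (∏ n : Fin N,
            (Complex.I * (k n.castSucc : ℂ) - Complex.I * (k (Fin.last N) : ℂ)))⁻¹
          * Matrix.det (Matrix.of fun n m : Fin (N + 1) =>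
              Complex.exp (Complex.I * (k n : ℂ) * (x m : ℂ))) := by
  set b : ℂ := Complex.I * k (Fin.last N)
  set c : Fin N → ℂ := fun n => Complex.I * k n.castSucc - b
  set E : ℂ := Complex.exp (b * ∑ i, (x i : ℂ))
  have hc : ∀ n, c n ≠ 0 := fun n => by
    simpa [c, b, ← mul_sub, sub_eq_zero] using hk _ _ (Fin.castSucc_lt_last n).ne
  have hbox : {x' : Fin N → ℝ | ∀ i : Fin N, x i.succ < x' i ∧ x' i < x i.castSucc}
      = Set.univ.pi fun m => Set.Ioo (x m.succ) (x m.castSucc) := by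
    ext; simp [Set.mem_pi]
  have hintegrand : ∀ x' : Fin N → ℝ,
      (of fun n m : Fin N => Complex.exp (Complex.I * (k n.castSucc : ℂ) * (x' m : ℂ))).det
          * Complex.exp (b * (((∑ i, x i : ℝ) : ℂ) - ((∑ m, x' m : ℝ) : ℂ)))
        = E * (of fun n m => Complex.exp (c n * x' m)).det := fun x' => by
    rw [det_exp_mul_eq_exp_mul_det_exp_sub_mul _ _ b, mul_right_comm, ← Complex.exp_add]
    congr 2
    push_cast
    ring
  calc _ = E * ∫ x' in Set.univ.pi fun m => Set.Ioo (x m.succ) (x m.castSucc),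
          (of fun n m => Complex.exp (c n * x' m)).det := by
        simp_rw [hbox, hintegrand, integral_const_mul]
    _ = E * (of fun n m => ∫ t in Set.Ioo (x m.succ) (x m.castSucc),
          Complex.exp (c n * t)).det := by
        rw [volume_pi, Measure.restrict_pi_pi]
        exact congrArg (E * ·) <| integral_det_eq_det_integral
          (fun n _ (t : ℝ) => Complex.exp (c n * t))
          fun n m => integrableOn_exp_mul_complex_Ioo (x m.succ) (x m.castSucc) (c n)
    _ = E * ((∏ n, c n)⁻¹ * (of fun n m => Complex.exp (c n * x m.castSucc)
          - Complex.exp (c n * x m.succ)).det) := by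
        simp_rw [integral_Ioo_exp_mul_complex (hx _ _ Fin.castSucc_lt_succ).le (hc _),
          div_eq_inv_mul, ← Finset.prod_inv_distrib, ← det_mul_column]
        rfl
    _ = _ := by
        rw [det_exp_mul_eq_exp_mul_det_exp_sub_mul _ _ b,
          det_eq_det_sub_succ_col_of_last_row_eq_one _ fun _ => by simp [b]]
        exact mul_left_comm _ _ _
end
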